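/- Let (X,d) be a metric space such that the subspace nlc(X) is not separable. Then the Wijsman hyperspace (2^X, T_{W(d)}) contains a closed subspace homeomorphic to the product of ℵ₁-many copies of the discrete space ℕ (with the product topology), and consequently (2^X, T_{W(d)}) is not a normal space. -/

import Mathlib

/-- The Wijsman hyperspace of a metric space `X`: the collection `2^X` of all
nonempty closed subsets of `X`. -/
def WijsmanHyperspace (X : Type*) [MetricSpace X] : Type _ :=
  {A : Set X // A.Nonempty ∧ IsClosed A}

/-- The Wijsman topology `T_{W(d)}`: the topology induced from the product topology
on `X → ℝ` by the injection `A ↦ (x ↦ d(x, A))`, i.e. the weakest topology making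
all distance functionals `A ↦ d(x, A)` continuous. -/
noncomputable instance wijsmanTopology (X : Type*) [MetricSpace X] :
    TopologicalSpace (WijsmanHyperspace X) :=
  TopologicalSpace.induced (fun A (x : X) => Metric.infDist x A.1) Pi.topologicalSpace

/-- The set of points of `X` having no compact neighbourhood. -/
def nlc (X : Type*) [TopologicalSpace X] : Set X :=
  {x : X | ¬ ∃ K ∈ nhds x, IsCompact K}

/-!
Choose an uncountable family of centres `c i ∈ nlc X` that are pairwise at distance `≥ ε`. No
closed ball around `c i` is compact, so it contains an injective sequence `y i` without cluster
points. For `g : ι → ℕ` let `A g` be the union of the set of points at distance `≥ ε / 4` from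
every centre with the tails `{y i n | g i ≤ n}`. Near `c i` the distance to `A g` depends on `g i`
only, so `g ↦ A g` is continuous; conversely `g i` is read off from the distances of the points
`y i n` to `A g`; and the sets `A g` are characterised by conditions that are closed in the Wijsman
topology. Hence `ℕ^ι` embeds as a closed subspace, and since `ℕ^ι` is not normal for uncountable
`ι` (Stone), neither is the hyperspace.
-/

open Metric Set Topology Function TopologicalSpace Filter
open scoped NNReal ENNReal Cardinal

theorem Metric.exists_isSeparated_not_countable {X : Type*} [PseudoMetricSpace X]
    (h : ¬ SeparableSpace X) : ∃ ε : ℝ≥0, ε ≠ 0 ∧ ∃ s : Set X, IsSeparated ε s ∧ ¬ s.Countable := by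
  by_contra! H
  suffices SecondCountableTopology X from h inferInstance
  refine secondCountable_of_almost_dense_set fun ε hε => ?_
  lift ε to ℝ≥0 using hε.le
  obtain ⟨N, hN⟩ := zorn_subset {N : Set X | IsSeparated ε N} fun c hcS hc =>
    ⟨⋃₀ c, hc.pairwise_sUnion.2 hcS, fun _ => subset_sUnion_of_mem⟩
  have hcover : IsCover ε univ N :=
    .of_maximal_isSeparated ⟨⟨subset_univ _, hN.prop⟩, fun M hM hNM => hN.le_of_ge hM.2 hNM⟩
  refine ⟨N, H ε (mod_cast hε.ne') N hN.prop, fun x => ?_⟩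
  simpa [dist_comm] using
    (isCover_iff_subset_iUnion_closedBall.1 hcover) (mem_univ x)

theorem IsClosed.exists_injective_locallyFinite_of_not_isCompact {X : Type*} [MetricSpace X]
    {B : Set X} (hB : IsClosed B) (hBc : ¬ IsCompact B) :
    ∃ y : ℕ → X, Injective y ∧ (∀ n, y n ∈ B) ∧ LocallyFinite fun n => ({y n} : Set X) := by
  rw [isCompact_iff_isSeqCompact, ← isCountablyCompact_iff_isSeqCompact,
    isCountablyCompact_iff_infinite_subset_has_accPt] at hBc
  push Not at hBc
  obtain ⟨D, hDB, hD, hacc⟩ := hBc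
  have hacc' : ∀ z, ¬ AccPt z (𝓟 D) := fun z hz =>
    hacc z (hB.closure_subset_iff.2 hDB (mem_closure_iff_clusterPt.2 hz.clusterPt)) hz
  have hinj : Injective fun n => (hD.natEmbedding _ n : X) :=
    Subtype.val_injective.comp (hD.natEmbedding _).injective
  refine ⟨_, hinj, fun n => hDB (hD.natEmbedding _ n).2, fun z => ?_⟩
  obtain ⟨U, hU, hUD⟩ : ∃ U ∈ 𝓝 z, ∀ y ∈ U ∩ D, y = z := by
    simpa [accPt_iff_nhds] using hacc' z
  refine ⟨U, hU, ((finite_singleton z).preimage hinj.injOn).subset ?_⟩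
  rintro n ⟨_, rfl, hn⟩
  exact hUD _ ⟨hn, (hD.natEmbedding _ n).2⟩

theorem LocallyFinite.isClosed_image_of_singleton {X κ : Type*} [TopologicalSpace X] [T1Space X]
    {p : κ → X} (hp : LocallyFinite fun k => ({p k} : Set X)) (s : Set κ) :
    IsClosed (p '' s) := by
  rw [image_eq_range, ← iUnion_singleton_eq_range]
  exact (hp.comp_injective Subtype.val_injective).isClosed_iUnion fun _ => isClosed_singleton

theorem Metric.infDist_eq_of_subset_of_dist_le {X : Type*} [PseudoMetricSpace X] {s t : Set X}
    {x y : X} (hst : s ⊆ t) (hy : y ∈ s) (h : ∀ z ∈ t, z ∉ s → dist x y ≤ dist x z) :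
    infDist x t = infDist x s := by
  refine le_antisymm (infDist_le_infDist_of_subset hst ⟨y, hy⟩) ?_
  refine (le_infDist ⟨y, hst hy⟩).2 fun z hz => ?_
  by_cases hzs : z ∈ s
  · exact infDist_le_dist_of_mem hzs
  · exact (infDist_le_dist_of_mem hy).trans (h z hz hzs)

namespace WijsmanHyperspace

variable {X : Type*} [MetricSpace X]

theorem continuous_infDist (x : X) :
    Continuous fun A : WijsmanHyperspace X => infDist x A.1 :=
  (continuous_apply x).comp
    (continuous_induced_dom : Continuous fun (A : WijsmanHyperspace X) (y : X) => infDist y A.1)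

theorem isClosed_setOf_mem (x : X) : IsClosed {A : WijsmanHyperspace X | x ∈ A.1} := by
  have : {A : WijsmanHyperspace X | x ∈ A.1} = {A | infDist x A.1 = 0} := by
    ext A; exact A.2.2.mem_iff_infDist_zero A.2.1
  rw [this]
  exact isClosed_eq (continuous_infDist x) continuous_const

theorem isClosed_setOf_superset (s : Set X) : IsClosed {A : WijsmanHyperspace X | s ⊆ A.1} := by
  simp only [subset_def, ofPred_forall]
  exact isClosed_biInter fun x _ => isClosed_setOf_mem x

theorem isClosed_setOf_subset {F : Set X} (hF : IsClosed F) :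
    IsClosed {A : WijsmanHyperspace X | A.1 ⊆ F} := by
  rcases F.eq_empty_or_nonempty with rfl | hFne
  · convert isClosed_empty
    exact eq_empty_of_forall_notMem fun A hA => A.2.1.ne_empty (subset_empty_iff.1 hA)
  have : {A : WijsmanHyperspace X | A.1 ⊆ F} = ⋂ x, {A | infDist x F ≤ infDist x A.1} := by
    ext A
    simp only [mem_ofPred_eq, mem_iInter]
    refine ⟨fun h x => infDist_le_infDist_of_subset h A.2.1, fun h x hx => ?_⟩
    rw [hF.mem_iff_infDist_zero hFne]
    exact le_antisymm ((h x).trans (infDist_zero_of_mem hx).le) infDist_nonneg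
  rw [this]
  exact isClosed_iInter fun x => isClosed_le continuous_const (continuous_infDist x)

end WijsmanHyperspace

theorem IsOpen.exists_finset_eqOn_subset {ι Y : Type*} [TopologicalSpace Y] [DiscreteTopology Y]
    {U : Set (ι → Y)} (hU : IsOpen U) {f : ι → Y} (hf : f ∈ U) :
    ∃ E : Finset ι, {g | EqOn g f E} ⊆ U := by
  obtain ⟨E, u, hu, hEU⟩ := isOpen_pi_iff.1 hU f hf
  refine ⟨E, fun g hg => hEU fun i hi => ?_⟩
  rw [hg hi]
  exact (hu i hi).2

section Stone

variable {ι : Type*}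

def stoneSet (k : ℕ) : Set (ι → ℕ) := {f | InjOn f (f ⁻¹' {k}ᶜ)}

theorem isClosed_stoneSet (k : ℕ) : IsClosed (stoneSet (ι := ι) k) := by
  have : stoneSet (ι := ι) k = ⋂ (s) (t), (fun f : ι → ℕ => (f s, f t)) ⁻¹'
      {p | p.1 ≠ k → p.2 ≠ k → p.1 = p.2 → s = t} := by
    ext f
    simp only [stoneSet, InjOn, mem_ofPred_eq, mem_iInter, mem_preimage, mem_compl_iff,
      mem_singleton_iff]
    exact ⟨fun h s t hs ht => h hs ht, fun h s hs t ht => h s t hs ht⟩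
  rw [this]
  exact isClosed_iInter fun s => isClosed_iInter fun t =>
    (isClosed_discrete _).preimage (by fun_prop)

theorem disjoint_stoneSet_one_zero [Uncountable ι] :
    Disjoint (stoneSet (ι := ι) 1) (stoneSet 0) := by
  refine disjoint_left.2 fun f h₁ h₀ => not_countable (α := ι) (Injective.countable (f := f) ?_)
  intro s t hst
  by_cases hs : f s = 0
  · exact h₁ (by simp [hs]) (by simp [← hst, hs]) hst
  · exact h₀ hs (by simpa [← hst] using hs) hst

structure IsStoneApprox (E : Finset ι) (f : ι → ℕ) : Prop where
  injOn : InjOn f E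
  two_le : ∀ s ∈ E, 2 ≤ f s
  eq_one : ∀ s ∉ E, f s = 1

theorem IsStoneApprox.mem_stoneSet_one {E : Finset ι} {f : ι → ℕ} (h : IsStoneApprox E f) :
    f ∈ stoneSet 1 :=
  h.injOn.mono fun s hs => by_contra fun hsE => hs (h.eq_one s hsE)

theorem IsStoneApprox.exists_extend [DecidableEq ι] {E E' : Finset ι} {f : ι → ℕ}
    (h : IsStoneApprox E f) (hE : E ⊆ E') :
    ∃ f', IsStoneApprox E' f' ∧ EqOn f' f E := by
  obtain ⟨c, hc⟩ := countable_iff_exists_injOn.1 E'.countable_toSet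
  -- new indices get the values `E.sup f + 2 + c s`, which are `≥ 2` and avoid all old values
  refine ⟨fun s => if s ∈ E then f s else if s ∈ E' then E.sup f + 2 + c s else 1,
    ⟨fun s hs t ht hst => ?_, fun s hs => ?_, fun s hs => ?_⟩, fun s hs => if_pos hs⟩
  · have hle : ∀ s ∈ E, f s ≤ E.sup f := fun s hs => Finset.le_sup hs
    by_cases hsE : s ∈ E <;> by_cases htE : t ∈ E <;> simp_all
    · exact h.injOn hsE htE hst
    · have := hle s hsE; omega
    · have := hle t htE; omega
    · exact hc hs ht hst
  · by_cases hsE : s ∈ E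
    · simpa [hsE] using h.two_le s hsE
    · simp only [hsE, hs, if_false, if_true]
      omega
  · simp [hs, show s ∉ E from fun h' => hs (hE h')]

theorem exists_isStoneApprox_seq {U : Set (ι → ℕ)} (hU : IsOpen U) (hAU : stoneSet 1 ⊆ U) :
    ∃ (E : ℕ → Finset ι) (f : ℕ → ι → ℕ), Monotone E ∧ (∀ k, IsStoneApprox (E k) (f k)) ∧
      (∀ k l, k ≤ l → EqOn (f l) (f k) (E k)) ∧ ∀ k, {g | EqOn g (f k) (E (k + 1))} ⊆ U := by
  classical
  have step : ∀ p : Finset ι × (ι → ℕ), IsStoneApprox p.1 p.2 → ∃ q : Finset ι × (ι → ℕ),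
      IsStoneApprox q.1 q.2 ∧ p.1 ⊆ q.1 ∧ EqOn q.2 p.2 p.1 ∧ {g | EqOn g p.2 q.1} ⊆ U := by
    rintro ⟨E, f⟩ h
    obtain ⟨F, hF⟩ := hU.exists_finset_eqOn_subset (hAU h.mem_stoneSet_one)
    obtain ⟨f', hf', hff'⟩ := h.exists_extend (Finset.subset_union_left (s₂ := F))
    exact ⟨(E ∪ F, f'), hf', Finset.subset_union_left, hff',
      fun g hg => hF fun s hs => hg (by simp [hs])⟩
  choose! next hnext using step
  set p : ℕ → Finset ι × (ι → ℕ) := fun k => next^[k] (∅, fun _ => 1)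
  have hp_succ (k : ℕ) : p (k + 1) = next (p k) := iterate_succ_apply' ..
  have hp (k : ℕ) : IsStoneApprox (p k).1 (p k).2 := by
    induction k with
    | zero => exact ⟨by simp [p], by simp [p], fun _ _ => rfl⟩
    | succ k ih => rw [hp_succ]; exact (hnext _ ih).1
  have hE : Monotone fun k => (p k).1 :=
    monotone_nat_of_le_succ fun k => hp_succ k ▸ (hnext _ (hp k)).2.1
  have hstab (k l : ℕ) (hkl : k ≤ l) : EqOn (p l).2 (p k).2 (p k).1 := by
    induction l, hkl using Nat.le_induction with
    | base => exact fun _ _ => rfl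
    | succ l hkl ih =>
      intro s hs
      rw [← ih hs, hp_succ]
      exact (hnext _ (hp l)).2.2.1 (hE hkl hs)
  refine ⟨fun k => (p k).1, fun k => (p k).2, hE, hp, hstab, fun k => ?_⟩
  simpa only [hp_succ] using (hnext _ (hp k)).2.2.2

theorem exists_mem_stoneSet_zero_eqOn {E : ℕ → Finset ι} {f : ℕ → ι → ℕ} (hE : Monotone E)
    (hf : ∀ k, IsStoneApprox (E k) (f k)) (hstab : ∀ k l, k ≤ l → EqOn (f l) (f k) (E k)) :
    ∃ g ∈ stoneSet 0, ∀ k, EqOn g (f k) (E k) := by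
  classical
  let g : ι → ℕ := fun s => if h : ∃ k, s ∈ E k then f (Nat.find h) s else 0
  have hg (k : ℕ) : EqOn g (f k) (E k) := fun s hs => by
    have h : ∃ k, s ∈ E k := ⟨k, hs⟩
    simp only [g, dif_pos h]
    exact (hstab _ k (Nat.find_min' h hs) (Nat.find_spec h)).symm
  have hmem {s : ι} (hs : g s ≠ 0) : ∃ k, s ∈ E k := by_contra fun h => hs (dif_neg h)
  refine ⟨g, fun s hs t ht hst => ?_, hg⟩
  obtain ⟨a, ha⟩ := hmem hs
  obtain ⟨b, hb⟩ := hmem ht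
  have ha' := hE (le_max_left a b) ha
  have hb' := hE (le_max_right a b) hb
  refine (hf (max a b)).injOn ha' hb' ?_
  rw [← hg _ ha', ← hg _ hb', hst]

theorem not_normalSpace_pi_nat [Uncountable ι] : ¬ NormalSpace (ι → ℕ) := by
  intro _
  obtain ⟨U, V, hU, hV, hAU, hAV, hUV⟩ := normal_separation (isClosed_stoneSet 1)
    (isClosed_stoneSet 0) (disjoint_stoneSet_one_zero (ι := ι))
  obtain ⟨E, f, hE, hf, hstab, hEU⟩ := exists_isStoneApprox_seq hU hAU
  obtain ⟨g, hg, hgf⟩ := exists_mem_stoneSet_zero_eqOn hE hf hstab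
  obtain ⟨F, hFV⟩ := hV.exists_finset_eqOn_subset (hAV hg)
  have hev (s : ι) : ∀ᶠ k in atTop, s ∈ E (k + 1) → s ∈ E k := by
    by_cases h : ∃ k, s ∈ E k
    · obtain ⟨k, hk⟩ := h
      exact eventually_atTop.2 ⟨k, fun l hl _ => hE hl hk⟩
    · exact Eventually.of_forall fun k hk => absurd ⟨k + 1, hk⟩ h
  obtain ⟨K, hK⟩ := ((eventually_all_finset F).2 fun s _ => hev s).exists
  classical
  -- on `E (K + 1)`, the set `F` only meets `E K`, where `g` agrees with `f K`
  have hgU : F.piecewise g (f K) ∈ U := hEU K fun s hs => by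
    by_cases hsF : s ∈ F
    · rw [F.piecewise_eq_of_mem _ _ hsF, hgf (K + 1) hs]
      exact hstab K (K + 1) K.le_succ (hK s hsF hs)
    · exact F.piecewise_eq_of_notMem _ _ hsF
  exact disjoint_left.1 hUV hgU (hFV fun s hs => F.piecewise_eq_of_mem _ _ hs)

end Stone

structure SeparatedSequences (X : Type*) [MetricSpace X] (ι : Type*) where
  ε : ℝ
  center : ι → X
  point : ι → ℕ → X
  ε_pos : 0 < ε
  dist_center : Pairwise fun i j => ε ≤ dist (center i) (center j)
  dist_point_center : ∀ i n, dist (point i n) (center i) ≤ ε / 8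
  injective_point : ∀ i, Injective (point i)
  locallyFinite_point : ∀ i, LocallyFinite fun n => ({point i n} : Set X)

namespace SeparatedSequences

open WijsmanHyperspace

variable {X ι : Type*} [MetricSpace X] (S : SeparatedSequences X ι)

theorem eq_of_dist_lt {i j : ι} {z : X} {m : ℕ}
    (h : dist (S.center i) z + dist z (S.point j m) < 7 * S.ε / 8) : i = j := by
  by_contra hij
  linarith [S.dist_center hij, dist_triangle4 (S.center i) z (S.point j m) (S.center j),
    S.dist_point_center j m]

def farSet : Set X := {z | ∀ i, S.ε / 4 ≤ dist z (S.center i)}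

def tail (g : ι → ℕ) : Set X := (fun p : ι × ℕ => S.point p.1 p.2) '' {p | g p.1 ≤ p.2}

def set (g : ι → ℕ) : Set X := S.farSet ∪ S.tail g

theorem isClosed_farSet : IsClosed S.farSet := by
  simp only [farSet, ofPred_forall]
  exact isClosed_iInter fun i => isClosed_le continuous_const (continuous_id.dist continuous_const)

theorem locallyFinite_point_prod : LocallyFinite fun p : ι × ℕ => ({S.point p.1 p.2} : Set X) := by
  intro z
  by_cases hz : ∃ i, dist z (S.center i) < S.ε / 4
  · obtain ⟨i, hi⟩ := hz
    obtain ⟨U, hU, hfin⟩ := S.locallyFinite_point i z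
    refine ⟨U ∩ ball z (S.ε / 4), inter_mem hU (ball_mem_nhds z (by linarith [S.ε_pos])),
      (hfin.image fun n => (i, n)).subset ?_⟩
    rintro ⟨j, m⟩ ⟨_, rfl, hmU, hm⟩
    obtain rfl : i = j := S.eq_of_dist_lt (z := z) (m := m) (by
      rw [mem_ball, dist_comm] at hm; rw [dist_comm]; linarith [S.ε_pos])
    exact ⟨m, ⟨_, rfl, hmU⟩, rfl⟩
  · push Not at hz
    refine ⟨ball z (S.ε / 8), ball_mem_nhds z (by linarith [S.ε_pos]), finite_empty.subset ?_⟩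
    rintro ⟨j, m⟩ ⟨_, rfl, hm⟩
    rw [mem_ball, dist_comm] at hm
    exfalso
    linarith [hz j, dist_triangle z (S.point j m) (S.center j), S.dist_point_center j m]

theorem isClosed_set (g : ι → ℕ) : IsClosed (S.set g) :=
  S.isClosed_farSet.union (S.locallyFinite_point_prod.isClosed_image_of_singleton _)

theorem point_mem_set (g : ι → ℕ) (i : ι) : S.point i (g i) ∈ S.set g :=
  Or.inr ⟨(i, g i), le_refl (g i), rfl⟩

theorem set_nonempty [Nonempty ι] (g : ι → ℕ) : (S.set g).Nonempty :=
  ⟨_, S.point_mem_set g (Classical.arbitrary ι)⟩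

theorem point_notMem_farSet (i : ι) (n : ℕ) : S.point i n ∉ S.farSet := fun h =>
  by linarith [h i, S.dist_point_center i n, S.ε_pos]

theorem point_mem_set_iff {g : ι → ℕ} {i : ι} {n : ℕ} : S.point i n ∈ S.set g ↔ g i ≤ n := by
  refine ⟨?_, fun h => Or.inr ⟨(i, n), h, rfl⟩⟩
  rintro (h | ⟨⟨j, m⟩, hm, heq⟩)
  · exact absurd h (S.point_notMem_farSet i n)
  obtain rfl : j = i := S.eq_of_dist_lt (z := S.point i n) (m := n) (by
    rw [← heq, dist_self, add_zero, dist_comm]; linarith [S.dist_point_center j m, S.ε_pos])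
  obtain rfl := S.injective_point j heq
  exact hm

theorem set_antitone : Antitone S.set := by
  rintro g g' hg x (hx | ⟨p, hp, rfl⟩)
  · exact Or.inl hx
  · exact Or.inr ⟨p, (hg p.1).trans hp, rfl⟩

theorem infDist_set_eq {z : X} {i : ι} (hz : dist z (S.center i) < S.ε / 4) (g : ι → ℕ) :
    infDist z (S.set g) = infDist z (S.farSet ∪ S.point i '' Ici (g i)) := by
  refine infDist_eq_of_subset_of_dist_le (union_subset_union_right _ ?_)
    (Or.inr ⟨g i, self_mem_Ici, rfl⟩) ?_
  · rintro _ ⟨n, hn, rfl⟩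
    exact ⟨(i, n), hn, rfl⟩
  rintro _ (hx | ⟨⟨j, m⟩, hm, rfl⟩) hxs
  · exact absurd (Or.inl hx) hxs
  have hij : i ≠ j := by
    rintro rfl
    exact hxs (Or.inr ⟨m, hm, rfl⟩)
  by_contra! hlt
  dsimp only at hlt
  refine hij (S.eq_of_dist_lt (z := z) (m := m) ?_)
  linarith [dist_triangle z (S.center i) (S.point i (g i)), S.dist_point_center i (g i),
    dist_comm (S.center i) (S.point i (g i)), dist_comm (S.center i) z, S.ε_pos]

theorem infDist_point_pos_iff {g : ι → ℕ} {i : ι} {n : ℕ} :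
    0 < infDist (S.point i n) (S.set g) ↔ n < g i := by
  rw [← (S.isClosed_set g).notMem_iff_infDist_pos ⟨_, S.point_mem_set g i⟩, point_mem_set_iff,
    not_le]

open Classical in
/-- A uniform lower bound for `infDist (S.point i n) (S.set g)` over all `g` with `n < g i`. -/
noncomputable def radius (i : ι) (n : ℕ) : ℝ := infDist (S.point i n) (S.set (update 0 i (n + 1)))

theorem radius_pos (i : ι) (n : ℕ) : 0 < S.radius i n :=
  S.infDist_point_pos_iff.2 (by simp)

theorem radius_le_infDist {g : ι → ℕ} {i : ι} {n : ℕ} (h : n < g i) :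
    S.radius i n ≤ infDist (S.point i n) (S.set g) := by
  refine infDist_le_infDist_of_subset (S.set_antitone fun j => ?_) ⟨_, S.point_mem_set g i⟩
  rcases eq_or_ne j i with rfl | hj
  · simpa using h
  · simp [hj]

theorem infDist_point_lt_radius_iff {g : ι → ℕ} {i : ι} {n : ℕ} :
    infDist (S.point i n) (S.set g) < S.radius i n ↔ g i ≤ n := by
  refine ⟨fun h => not_lt.1 fun hn => (S.radius_le_infDist hn).not_gt h, fun h => ?_⟩
  rw [infDist_zero_of_mem (S.point_mem_set_iff.2 h)]
  exact S.radius_pos i n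

theorem exists_set_eq {B : Set X} (hfar : S.farSet ⊆ B) (hB : B ⊆ S.set 0)
    (hup : ∀ i m n, m ≤ n → S.point i m ∈ B → S.point i n ∈ B)
    (hhit : ∀ i, ∃ m, S.point i m ∈ B) : ∃ g, S.set g = B := by
  classical
  refine ⟨fun i => Nat.find (hhit i), subset_antisymm (union_subset hfar ?_) fun x hx => ?_⟩
  · rintro _ ⟨⟨i, n⟩, hn, rfl⟩
    exact hup i _ n hn (Nat.find_spec (hhit i))
  · rcases hB hx with hx | ⟨⟨i, n⟩, -, rfl⟩
    · exact Or.inl hx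
    · exact Or.inr ⟨(i, n), Nat.find_min' (hhit i) hx, rfl⟩

variable [Nonempty ι]

noncomputable def toHyperspace (g : ι → ℕ) : WijsmanHyperspace X :=
  ⟨S.set g, S.set_nonempty g, S.isClosed_set g⟩

theorem continuous_toHyperspace : Continuous S.toHyperspace := by
  refine continuous_induced_rng.2 (continuous_pi fun z => ?_)
  change Continuous fun g => infDist z (S.set g)
  by_cases hz : ∃ i, dist z (S.center i) < S.ε / 4
  · obtain ⟨i, hi⟩ := hz
    have : (fun g => infDist z (S.set g)) =
        (fun n => infDist z (S.farSet ∪ S.point i '' Ici n)) ∘ fun g => g i :=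
      funext (S.infDist_set_eq hi)
    rw [this]
    exact continuous_of_discreteTopology.comp (continuous_apply i)
  · push Not at hz
    have : (fun g => infDist z (S.set g)) = fun _ => 0 :=
      funext fun g => infDist_zero_of_mem (Or.inl hz)
    rw [this]
    exact continuous_const

theorem injective_toHyperspace : Injective S.toHyperspace := by
  intro g g' h
  have hset : S.set g = S.set g' := congrArg Subtype.val h
  funext i
  refine le_antisymm ?_ ?_
  · exact S.point_mem_set_iff.1 (hset ▸ S.point_mem_set g' i)
  · exact S.point_mem_set_iff.1 (hset.symm ▸ S.point_mem_set g i)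

theorem isInducing_toHyperspace : IsInducing S.toHyperspace := by
  refine ⟨le_antisymm (continuous_iff_le_induced.1 S.continuous_toHyperspace) ?_⟩
  refine le_iInf fun i => continuous_iff_le_induced.1 ?_
  let := TopologicalSpace.induced S.toHyperspace (wijsmanTopology X)
  refine OrderTopology.continuous_iff.2 fun n => ⟨?_, ?_⟩
  · have : (fun g : ι → ℕ => g i) ⁻¹' Ioi n =
        S.toHyperspace ⁻¹' {A | 0 < infDist (S.point i n) A.1} := by
      ext g
      exact S.infDist_point_pos_iff.symm
    rw [this]
    exact isOpen_induced (isOpen_lt continuous_const (WijsmanHyperspace.continuous_infDist _))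
  · have : (fun g : ι → ℕ => g i) ⁻¹' Iio n =
        ⋃ m < n, S.toHyperspace ⁻¹' {A | infDist (S.point i m) A.1 < S.radius i m} := by
      ext g
      simp only [mem_preimage, mem_Iio, mem_iUnion, mem_ofPred_eq, exists_prop]
      simp_rw [toHyperspace, S.infDist_point_lt_radius_iff]
      exact ⟨fun h => ⟨g i, h, le_rfl⟩, fun ⟨m, hm, h⟩ => h.trans_lt hm⟩
    rw [this]
    exact isOpen_biUnion fun m _ =>
      isOpen_induced (isOpen_lt (WijsmanHyperspace.continuous_infDist _) continuous_const)

theorem isClosed_range_toHyperspace : IsClosed (range S.toHyperspace) := by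
  refine isClosed_of_closure_subset fun B hB => ?_
  have closure_mem {P : WijsmanHyperspace X → Prop} (hP : IsClosed {A | P A})
      (h : ∀ g, P (S.toHyperspace g)) : P B :=
    closure_minimal (range_subset_iff.2 h) hP hB
  have hsub : B.1 ⊆ S.set 0 := closure_mem (isClosed_setOf_subset (S.isClosed_set 0))
    fun g => S.set_antitone fun i => Nat.zero_le (g i)
  refine (S.exists_set_eq (closure_mem (isClosed_setOf_superset _) fun g => subset_union_left)
    hsub (fun i m n hmn hm => ?_) fun i => ?_).imp fun g hg => Subtype.ext hg
  · have : S.point i n ∈ B.1 ∨ S.radius i m ≤ infDist (S.point i m) B.1 := by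
      refine closure_mem ((isClosed_setOf_mem _).union
        (isClosed_le continuous_const (continuous_infDist _))) fun g => ?_
      rcases le_or_gt (g i) n with h | h
      · exact Or.inl (S.point_mem_set_iff.2 h)
      · exact Or.inr (S.radius_le_infDist (hmn.trans_lt h))
    refine this.resolve_right fun h => (S.radius_pos i m).not_ge ?_
    exact h.trans (infDist_zero_of_mem hm).le
  · have : infDist (S.center i) B.1 ≤ S.ε / 8 := by
      refine closure_mem (isClosed_le (continuous_infDist _) continuous_const) fun g => ?_
      exact (infDist_le_dist_of_mem (S.point_mem_set g i)).trans
        (dist_comm (S.center i) _ ▸ S.dist_point_center i (g i))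
    obtain ⟨x, hxB, hx⟩ := (infDist_lt_iff B.2.1).1
      (this.trans_lt (by linarith [S.ε_pos] : S.ε / 8 < S.ε / 4))
    rcases hsub hxB with hfar | ⟨⟨j, m⟩, -, rfl⟩
    · exact absurd (hfar i) (by rw [dist_comm]; exact not_le.2 hx)
    · obtain rfl : i = j := S.eq_of_dist_lt (z := S.point j m) (m := m) (by
        rw [dist_self, add_zero]; linarith [S.ε_pos])
      exact ⟨m, hxB⟩

theorem isClosedEmbedding_toHyperspace : IsClosedEmbedding S.toHyperspace :=
  ⟨⟨S.isInducing_toHyperspace, S.injective_toHyperspace⟩, S.isClosed_range_toHyperspace⟩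

end SeparatedSequences

theorem WijsmanHyperspace.exists_isClosedEmbedding_pi_nat {X ι : Type*} [MetricSpace X]
    [Nonempty ι] {ε : ℝ} (hε : 0 < ε) {c : ι → X}
    (hc : Pairwise fun i j => ε ≤ dist (c i) (c j)) (hnlc : ∀ i, c i ∈ nlc X) :
    ∃ f : (ι → ℕ) → WijsmanHyperspace X, IsClosedEmbedding f := by
  have hball (i : ι) : ¬ IsCompact (closedBall (c i) (ε / 8)) := fun h =>
    hnlc i ⟨_, closedBall_mem_nhds _ (by positivity), h⟩
  choose y hy hyB hyfin using fun i =>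
    isClosed_closedBall.exists_injective_locallyFinite_of_not_isCompact (hball i)
  exact ⟨_, (SeparatedSequences.mk ε c y hε hc (fun i n => hyB i n) hy
    hyfin).isClosedEmbedding_toHyperspace⟩

theorem WijsmanHyperspace.exists_isClosedEmbedding_pi_nat_of_not_separableSpace {X : Type*}
    [MetricSpace X] (h : ¬ SeparableSpace (nlc X)) (ι : Type*) [Nonempty ι] (hι : #ι ≤ ℵ₁) :
    ∃ f : (ι → ℕ) → WijsmanHyperspace X, IsClosedEmbedding f := by
  obtain ⟨ε, hε, S, hS, hScount⟩ := exists_isSeparated_not_countable h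
  have : Uncountable S := not_countable_iff.1 (countable_coe_iff.not.2 hScount)
  obtain ⟨e⟩ : Nonempty (ι ↪ S) := by
    rw [← Cardinal.lift_mk_le']
    calc Cardinal.lift #ι ≤ Cardinal.lift ℵ₁ := Cardinal.lift_le.2 hι
      _ = ℵ₁ := by simp
      _ ≤ Cardinal.lift #S := by simp [Cardinal.aleph_one_le_iff, Cardinal.aleph0_lt_mk]
  refine exists_isClosedEmbedding_pi_nat (NNReal.coe_pos.2 (pos_iff_ne_zero.2 hε))
    (c := fun i => (e i : nlc X)) (fun i j hij => ?_) fun i => (e i : nlc X).2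
  have hlt : (ε : ℝ≥0∞) < edist (e i : nlc X) (e j) :=
    hS (e i).2 (e j).2 (Subtype.val_injective.ne (e.injective.ne hij))
  rw [edist_nndist, ENNReal.coe_lt_coe, ← NNReal.coe_lt_coe, coe_nndist, Subtype.dist_eq] at hlt
  exact hlt.le

/-- If `nlc X` is a non-separable subspace of the metric space `(X,d)`, then the
Wijsman hyperspace contains a closed copy of `ℕ^{ℵ₁}` (the product of `ℵ₁`-many
copies of the discrete space `ℕ`) and is consequently not normal. -/
theorem stmt4 (X : Type*) [MetricSpace X]
    (h : ¬ TopologicalSpace.SeparableSpace (nlc X)) :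
    (∀ (ι : Type) (_ : Cardinal.mk ι = Cardinal.aleph 1),
      ∃ f : (ι → ℕ) → WijsmanHyperspace X, Topology.IsClosedEmbedding f) ∧
    ¬ NormalSpace (WijsmanHyperspace X) := by
  have embed (ι : Type) (hι : #ι = ℵ₁) :
      ∃ f : (ι → ℕ) → WijsmanHyperspace X, IsClosedEmbedding f :=
    have : Nonempty ι := Cardinal.mk_ne_zero_iff.1 (hι ▸ (Cardinal.aleph_pos 1).ne')
    WijsmanHyperspace.exists_isClosedEmbedding_pi_nat_of_not_separableSpace h ι hι.le
  refine ⟨embed, fun _ => ?_⟩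
  obtain ⟨f, hf⟩ := embed _ (Cardinal.mk_out ℵ₁)
  have : Uncountable (ℵ₁ : Cardinal.{0}).out := by
    rw [← Cardinal.aleph0_lt_mk_iff, Cardinal.mk_out]; exact Cardinal.aleph0_lt_aleph_one
  exact not_normalSpace_pi_nat hf.normalSpace
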